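/- Let m1, m2 be positive integers with gcd(m1,m2)=1 and m2 even. The set of self-intersection points of the closed curve ℓ(t), t ∈ [0,2π), has exactly m2(m1 − 1) + 2 elements: the two poles (0,0,±1), each traversed m2 times per period, and m2(m1 − 1) non-polar double points, each traversed exactly twice. -/

import Mathlib

open Real

noncomputable def lissajous (m1 m2 : ℕ) (α : ℝ) (t : ℝ) : ℝ × ℝ × ℝ :=
  (Real.sin (m2 * t) * Real.cos (m1 * t - α * π),
   Real.sin (m2 * t) * Real.sin (m1 * t - α * π),
   Real.cos (m2 * t))

/-- The set of parameters in one period mapping to a given point. -/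
def paramSet (m1 m2 : ℕ) (α : ℝ) (x : ℝ × ℝ × ℝ) : Set ℝ :=
  {s ∈ Set.Ico (0:ℝ) (2 * π) | lissajous m1 m2 α s = x}

/-- The set of self-intersection points of the curve over one period. -/
def selfIntersections (m1 m2 : ℕ) (α : ℝ) : Set (ℝ × ℝ × ℝ) :=
  {x | (∃ t ∈ Set.Ico (0:ℝ) (2 * π), lissajous m1 m2 α t = x) ∧
       2 ≤ Set.ncard (paramSet m1 m2 α x)}

/-!
Write `ℓ t` in spherical coordinates with polar angle `φ = m₂ t` and azimuth `θ = m₁ t - απ`.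
Off the poles, `(φ', θ')` and `(φ, θ)` give the same point iff `(φ', θ') ≡ (φ, θ)` or
`(φ', θ') ≡ (-φ, θ + π)` modulo `2π`. By coprimality the first case means `s ≡ t`, so a
non-polar double point comes from a crossing pair `m₂ s ≡ -m₂ t`, `m₁ s ≡ m₁ t + π`, and the
partner is again unique modulo `2π`. Since `m₂` is even, a Bézout identity shows that `t` has a
partner iff `m₁ m₂ t ∈ πℤ`; the non-polar ones among these are `Nπ / (m₁ m₂)` with
`0 ≤ N < 2 m₁ m₂` and `m₁ ∤ N`, i.e. `2 m₂ (m₁ - 1)` parameters, identified in pairs by the curve.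
Each pole is reached where `m₂ t` hits one residue modulo `2π`, i.e. at `m₂` parameters.
-/

open AddCommGroup Set

theorem AddCommGroup.ModEq.eq_of_mem_Ico {G : Type*} [AddCommGroup G] [LinearOrder G]
    [IsOrderedAddMonoid G] [Archimedean G] {p a b c : G} (hp : 0 < p) (h : b ≡ c [PMOD p])
    (hb : b ∈ Ico a (a + p)) (hc : c ∈ Ico a (a + p)) : b = c := by
  rw [← (toIcoMod_eq_self hp).2 hb, ← (toIcoMod_eq_self hp).2 hc]
  exact h.toIcoMod_eq_toIcoMod hp

theorem AddCommGroup.modEq_iff_nsmul_modEq_of_coprime {G : Type*} [AddCommGroup G] {p a b : G}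
    {m n : ℕ} (hmn : m.Coprime n) :
    a ≡ b [PMOD p] ↔ m • a ≡ m • b [PMOD p] ∧ n • a ≡ n • b [PMOD p] := by
  refine ⟨fun h ↦ ⟨h.nsmul.of_nsmul, h.nsmul.of_nsmul⟩, fun ⟨hm, hn⟩ ↦ ?_⟩
  obtain ⟨u, v, huv⟩ := Nat.isCoprime_iff_coprime.2 hmn
  rw [modEq_iff_zsmul'] at *
  obtain ⟨x, hx⟩ := hm
  obtain ⟨y, hy⟩ := hn
  refine ⟨u * x + v * y, ?_⟩
  rw [← nsmul_sub, ← natCast_zsmul] at hx hy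
  rw [add_smul, mul_smul, mul_smul, ← hx, ← hy, ← mul_smul, ← mul_smul, ← add_smul, huv, one_smul]

theorem cos_eq_cos_and_sin_eq_sin_iff_modEq {a b : ℝ} :
    cos a = cos b ∧ sin a = sin b ↔ a ≡ b [PMOD 2 * π] := by
  rw [modEq_iff_zsmul']
  simp_rw [zsmul_eq_mul, mul_comm _ (2 * π)]
  rw [← Real.Angle.angle_eq_iff_two_pi_dvd_sub]
  refine ⟨fun h ↦ (Real.Angle.cos_sin_inj h.1 h.2).symm, fun h ↦ ?_⟩
  rw [← Real.Angle.cos_coe, ← Real.Angle.sin_coe, ← Real.Angle.cos_coe b, ← Real.Angle.sin_coe b, h]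
  exact ⟨rfl, rfl⟩

theorem ncard_setOf_mem_Ico_natCast_mul_modEq {p a : ℝ} (hp : 0 < p) (ha : a ∈ Ico 0 p) {m : ℕ}
    (hm : 0 < m) : {t ∈ Ico 0 p | (m : ℝ) * t ≡ a [PMOD p]}.ncard = m := by
  have hm' : (0 : ℝ) < m := by exact_mod_cast hm
  have hsol : {t ∈ Ico 0 p | (m : ℝ) * t ≡ a [PMOD p]} =
      (fun k : ℕ ↦ (a + k * p) / m) '' ↑(Finset.range m) := by
    ext t
    simp only [mem_Ico, mem_image, Finset.coe_range, mem_Iio,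
      modEq_iff_eq_add_zsmul, zsmul_eq_mul]
    constructor
    · rintro ⟨⟨ht0, htp⟩, z, hz⟩
      obtain ⟨k, rfl⟩ : ∃ k : ℕ, z = -k := by
        refine Int.exists_eq_neg_ofNat (Int.lt_add_one_iff.1 ?_)
        have : (z : ℝ) < 1 := by nlinarith [ha.2]
        exact_mod_cast this
      push_cast at hz
      refine ⟨k, ?_, by rw [div_eq_iff hm'.ne']; linarith⟩
      have : (k : ℝ) < m := by nlinarith [ha.1]
      exact_mod_cast this
    · rintro ⟨k, hk, rfl⟩
      have hk' : (k : ℝ) + 1 ≤ m := by exact_mod_cast hk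
      refine ⟨⟨by have := ha.1; positivity, ?_⟩, -k, by push_cast; field_simp; ring⟩
      rw [div_lt_iff₀ hm']
      nlinarith [ha.2]
  rw [hsol, ncard_image_of_injective _ fun k l hkl ↦ ?_, ncard_coe_finset, Finset.card_range]
  rw [div_left_inj' hm'.ne', add_right_inj] at hkl
  exact_mod_cast mul_right_cancel₀ hp.ne' hkl

theorem Nat.card_filter_not_dvd_range_mul (m n : ℕ) :
    ({k ∈ Finset.range (m * n) | ¬ m ∣ k} : Finset ℕ).card = n * (m - 1) := by
  rcases Nat.eq_zero_or_pos m with rfl | hm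
  · simp
  have hdvd : {k ∈ Finset.range (m * n) | m ∣ k} =
      (Finset.range n).map ⟨(m * ·), mul_right_injective₀ hm.ne'⟩ := by
    ext k
    simp only [Finset.mem_filter, Finset.mem_range, Finset.mem_map, Function.Embedding.coeFn_mk]
    constructor
    · rintro ⟨hk, j, rfl⟩
      exact ⟨j, Nat.lt_of_mul_lt_mul_left hk, rfl⟩
    · rintro ⟨j, hj, rfl⟩
      exact ⟨Nat.mul_lt_mul_of_pos_left hj hm, dvd_mul_right m j⟩
  have := Finset.card_filter_add_card_filter_not (s := Finset.range (m * n)) (fun k ↦ m ∣ k)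
  rw [hdvd, Finset.card_map, Finset.card_range, Finset.card_range] at this
  rw [Nat.mul_sub_one, mul_comm n m]
  omega

theorem Nat.Coprime.ne_zero_of_even {m n : ℕ} (h : m.Coprime n) (hn : Even n) : m ≠ 0 := by
  rintro rfl
  rw [Nat.coprime_zero_left] at h
  subst h
  exact Nat.not_even_one hn

theorem Finset.card_eq_mul_card_image_of_card_fiber {ι M : Type*} [DecidableEq M] (f : ι → M)
    (s : Finset ι) {k : ℕ} (h : ∀ i ∈ s, ({j ∈ s | f j = f i} : Finset ι).card = k) :
    s.card = k * (s.image f).card := by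
  rw [card_eq_sum_card_image f s, mul_comm, ← smul_eq_mul, ← sum_const]
  refine sum_congr rfl fun x hx ↦ ?_
  obtain ⟨i, hi, rfl⟩ := mem_image.1 hx
  exact h i hi

noncomputable def sphericalPoint (φ θ : ℝ) : ℝ × ℝ × ℝ := (sin φ * cos θ, sin φ * sin θ, cos φ)

theorem sphericalPoint_eq_pole_iff {a : ℝ} (ha : sin a = 0) {φ θ : ℝ} :
    sphericalPoint φ θ = (0, 0, cos a) ↔ φ ≡ a [PMOD 2 * π] := by
  rw [← cos_eq_cos_and_sin_eq_sin_iff_modEq, ha]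
  simp only [sphericalPoint, Prod.mk.injEq]
  constructor
  · rintro ⟨h1, h2, h3⟩
    refine ⟨h3, pow_eq_zero_iff two_ne_zero |>.1 ?_⟩
    linear_combination (sin φ * cos θ) * h1 + (sin φ * sin θ) * h2 - sin φ ^ 2 * sin_sq_add_cos_sq θ
  · rintro ⟨h3, hs⟩
    simp [hs, h3]

theorem sphericalPoint_eq_sphericalPoint_iff {φ θ φ' θ' : ℝ} (h : sin φ' ≠ 0) :
    sphericalPoint φ θ = sphericalPoint φ' θ' ↔
      φ ≡ φ' [PMOD 2 * π] ∧ θ ≡ θ' [PMOD 2 * π] ∨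
        φ ≡ -φ' [PMOD 2 * π] ∧ θ ≡ θ' + π [PMOD 2 * π] := by
  simp only [sphericalPoint, Prod.mk.injEq, ← cos_eq_cos_and_sin_eq_sin_iff_modEq, cos_neg, sin_neg,
    cos_add_pi, sin_add_pi]
  constructor
  · rintro ⟨h1, h2, h3⟩
    rcases sq_eq_sq_iff_eq_or_eq_neg.1 (by rw [sin_sq, sin_sq, h3] : sin φ ^ 2 = sin φ' ^ 2)
      with hs | hs <;> rw [hs] at h1 h2
    · exact .inl ⟨⟨h3, hs⟩, mul_left_cancel₀ h h1, mul_left_cancel₀ h h2⟩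
    · exact .inr ⟨⟨h3, hs⟩, mul_left_cancel₀ h (by linarith), mul_left_cancel₀ h (by linarith)⟩
  · rintro (⟨⟨h3, hs⟩, hc, hs'⟩ | ⟨⟨h3, hs⟩, hc, hs'⟩) <;> simp [h3, hs, hc, hs']

section Lissajous

variable {m1 m2 : ℕ} {α : ℝ}

theorem lissajous_eq_sphericalPoint (t : ℝ) :
    lissajous m1 m2 α t = sphericalPoint (m2 * t) (m1 * t - α * π) := rfl

theorem lissajous_eq_pole_iff {a : ℝ} (ha : sin a = 0) {t : ℝ} :
    lissajous m1 m2 α t = (0, 0, cos a) ↔ (m2 : ℝ) * t ≡ a [PMOD 2 * π] :=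
  sphericalPoint_eq_pole_iff ha

theorem lissajous_eq_pole_of_sin_eq_zero {t : ℝ} (h : sin (m2 * t) = 0) :
    lissajous m1 m2 α t = (0, 0, 1) ∨ lissajous m1 m2 α t = (0, 0, -1) := by
  rcases sin_eq_zero_iff_cos_eq.1 h with hc | hc <;> simp [lissajous, h, hc]

theorem sin_eq_zero_of_lissajous_eq_pole {t : ℝ}
    (h : lissajous m1 m2 α t = (0, 0, 1) ∨ lissajous m1 m2 α t = (0, 0, -1)) :
    sin (m2 * t) = 0 := by
  refine sin_eq_zero_iff_cos_eq.2 ?_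
  rcases h with h | h
  · exact .inl (congrArg (·.2.2) h)
  · exact .inr (congrArg (·.2.2) h)

variable (m1 m2) in
/-- `s` reflects the polar angle `m₂ t` of `ℓ t` and turns its azimuth `m₁ t - απ` by `π`;
this is how two parameters of a non-polar double point are related. -/
def IsCrossingPair (s t : ℝ) : Prop :=
  (m2 : ℝ) * s ≡ -(m2 * t) [PMOD 2 * π] ∧ (m1 : ℝ) * s ≡ m1 * t + π [PMOD 2 * π]

theorem lissajous_eq_lissajous_iff (hcop : m1.Coprime m2) {s t : ℝ} (ht : sin (m2 * t) ≠ 0) :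
    lissajous m1 m2 α s = lissajous m1 m2 α t ↔ s ≡ t [PMOD 2 * π] ∨ IsCrossingPair m1 m2 s t := by
  have hθ : ∀ {a b : ℝ}, a - α * π ≡ b - α * π [PMOD 2 * π] ↔ a ≡ b [PMOD 2 * π] :=
    ⟨.sub_right_cancel' _, .sub_right _⟩
  rw [lissajous_eq_sphericalPoint, lissajous_eq_sphericalPoint,
    sphericalPoint_eq_sphericalPoint_iff ht, sub_add_eq_add_sub, hθ, hθ,
    modEq_iff_nsmul_modEq_of_coprime (a := s) hcop.symm, IsCrossingPair]
  simp only [nsmul_eq_mul]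

namespace IsCrossingPair

theorem symm {s t : ℝ} (h : IsCrossingPair m1 m2 s t) : IsCrossingPair m1 m2 t s := by
  obtain ⟨⟨a, ha⟩, ⟨b, hb⟩⟩ := And.imp modEq_iff_eq_add_zsmul.1 modEq_iff_eq_add_zsmul.1 h
  simp only [zsmul_eq_mul] at ha hb
  refine ⟨modEq_iff_eq_add_zsmul.2 ⟨a, ?_⟩, modEq_iff_eq_add_zsmul.2 ⟨1 - b, ?_⟩⟩
  · linear_combination ha
  · linear_combination -hb

theorem ne {s t : ℝ} (h : IsCrossingPair m1 m2 s t) : s ≠ t := by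
  rintro rfl
  obtain ⟨z, hz⟩ := modEq_iff_eq_add_zsmul.1 h.2
  have : ((1 - 2 * z : ℤ) : ℝ) * π = 0 := by push_cast; linear_combination hz
  have : 1 - 2 * z = 0 := by exact_mod_cast (mul_eq_zero.1 this).resolve_right pi_ne_zero
  omega

theorem sin_eq_neg {s t : ℝ} (h : IsCrossingPair m1 m2 s t) : sin (m2 * s) = -sin (m2 * t) :=
  (cos_eq_cos_and_sin_eq_sin_iff_modEq.2 h.1).2.trans (sin_neg _)

theorem of_modEq_left {r s t : ℝ} (hrs : r ≡ s [PMOD 2 * π]) (h : IsCrossingPair m1 m2 r t) :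
    IsCrossingPair m1 m2 s t := by
  have hmul : ∀ n : ℕ, (n : ℝ) * s ≡ n * r [PMOD 2 * π] := fun n ↦ by
    simpa only [nsmul_eq_mul] using hrs.symm.nsmul.of_nsmul
  exact ⟨(hmul m2).trans h.1, (hmul m1).trans h.2⟩

theorem modEq (hcop : m1.Coprime m2) {r s t : ℝ} (hr : IsCrossingPair m1 m2 r t)
    (hs : IsCrossingPair m1 m2 s t) : r ≡ s [PMOD 2 * π] := by
  rw [modEq_iff_nsmul_modEq_of_coprime hcop]
  simp only [nsmul_eq_mul]
  exact ⟨hr.2.trans hs.2.symm, hr.1.trans hs.1.symm⟩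

end IsCrossingPair

/-- With `m₂ = 2k`, a crossing partner of `t` exists iff `m₁ m₂ t ∈ πℤ`; the witness comes from
a Bézout identity `m₁ a - m₂ b = N + k`. -/
theorem exists_isCrossingPair_iff (hcop : m1.Coprime m2) (heven : Even m2) {t : ℝ} :
    (∃ s, IsCrossingPair m1 m2 s t) ↔ ∃ N : ℤ, (m1 * m2 : ℝ) * t = N * π := by
  obtain ⟨k, hk⟩ := heven
  have hk' : (m2 : ℝ) = k + k := by exact_mod_cast hk
  constructor
  · rintro ⟨s, h1, h2⟩
    obtain ⟨a, ha⟩ := modEq_iff_eq_add_zsmul.1 h1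
    obtain ⟨b, hb⟩ := modEq_iff_eq_add_zsmul.1 h2
    simp only [zsmul_eq_mul] at ha hb
    refine ⟨m2 * b - m1 * a - k, ?_⟩
    push_cast
    linear_combination (m2 / 2 : ℝ) * hb - (m1 / 2 : ℝ) * ha - (π / 2) * hk'
  · rintro ⟨N, hN⟩
    have hm1 : (m1 : ℝ) ≠ 0 := by exact_mod_cast hcop.ne_zero_of_even ⟨k, hk⟩
    obtain ⟨u, v, huv⟩ := Nat.isCoprime_iff_coprime.2 hcop
    refine ⟨t + (1 - 2 * v * (N + k)) * π / m1, modEq_iff_eq_add_zsmul.2 ⟨-u * (N + k), ?_⟩,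
      modEq_iff_eq_add_zsmul.2 ⟨v * (N + k), ?_⟩⟩
    · have huv' : (u : ℝ) * m1 + v * m2 = 1 := by exact_mod_cast huv
      rw [zsmul_eq_mul]
      push_cast
      field_simp
      linear_combination (-2) * hN + 2 * π * (N + k) * huv' - π * hk'
    · rw [zsmul_eq_mul]
      push_cast
      field_simp
      ring

variable (m1 m2) in
noncomputable def gridParam (N : ℕ) : ℝ := N * π / (m1 * m2)

variable (m1 m2) in
def crossingIndices : Finset ℕ := {N ∈ Finset.range (m1 * (2 * m2)) | ¬ m1 ∣ N}

theorem card_crossingIndices : (crossingIndices m1 m2).card = 2 * m2 * (m1 - 1) :=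
  Nat.card_filter_not_dvd_range_mul m1 (2 * m2)

theorem gridParam_injective (hm1 : m1 ≠ 0) (hm2 : m2 ≠ 0) :
    Function.Injective (gridParam m1 m2) := by
  intro N N' h
  have hm : (m1 * m2 : ℝ) ≠ 0 := by positivity
  rw [gridParam, gridParam, div_left_inj' hm] at h
  exact_mod_cast mul_right_cancel₀ pi_ne_zero h

theorem gridParam_mem_Ico {N : ℕ} (hN : N < m1 * (2 * m2)) :
    gridParam m1 m2 N ∈ Ico 0 (2 * π) := by
  have hN' : (N : ℝ) < m1 * (2 * m2) := by exact_mod_cast hN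
  have hm : (0 : ℝ) < m1 * m2 := by linarith [(N.cast_nonneg : (0 : ℝ) ≤ N)]
  refine ⟨by unfold gridParam; positivity, ?_⟩
  rw [gridParam, div_lt_iff₀ hm]
  nlinarith [pi_pos]

theorem exists_eq_gridParam (hm : m1 * m2 ≠ 0) {t : ℝ} (ht : t ∈ Ico 0 (2 * π)) {N : ℤ}
    (hN : (m1 * m2 : ℝ) * t = N * π) : ∃ n < m1 * (2 * m2), t = gridParam m1 m2 n := by
  have hm' : (0 : ℝ) < m1 * m2 := by exact_mod_cast Nat.pos_of_ne_zero hm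
  have h0 : 0 ≤ N := by
    have : (0 : ℝ) ≤ N * π := hN ▸ mul_nonneg hm'.le ht.1
    exact_mod_cast nonneg_of_mul_nonneg_left this pi_pos
  lift N to ℕ using h0
  refine ⟨N, ?_, ?_⟩
  · have : (N : ℝ) * π < (m1 * (2 * m2) : ℕ) * π := by push_cast at hN ⊢; nlinarith [ht.2]
    exact_mod_cast lt_of_mul_lt_mul_right this pi_pos.le
  · rw [gridParam, eq_div_iff hm'.ne', mul_comm, hN]
    rfl

theorem sin_mul_gridParam_eq_zero_iff (hm1 : m1 ≠ 0) (hm2 : m2 ≠ 0) {N : ℕ} :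
    sin (m2 * gridParam m1 m2 N) = 0 ↔ m1 ∣ N := by
  have e : (m2 : ℝ) * gridParam m1 m2 N = N / m1 * π := by
    unfold gridParam
    field_simp
  rw [e, sin_eq_zero_iff]
  constructor
  · rintro ⟨n, hn⟩
    have : ((m1 * n : ℤ) : ℝ) = (N : ℤ) := by
      field_simp at hn
      push_cast
      linarith
    exact Int.natCast_dvd_natCast.1 ⟨n, (Int.cast_injective this).symm⟩
  · rintro ⟨q, rfl⟩
    exact ⟨q, by push_cast; field_simp⟩

theorem paramSet_lissajous_eq_pair (hcop : m1.Coprime m2) {s t : ℝ} (hs : s ∈ Ico 0 (2 * π))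
    (ht : t ∈ Ico 0 (2 * π)) (hsin : sin (m2 * t) ≠ 0) (hst : IsCrossingPair m1 m2 s t) :
    paramSet m1 m2 α (lissajous m1 m2 α t) = {t, s} := by
  have hIco : ∀ {x y : ℝ}, x ≡ y [PMOD 2 * π] → x ∈ Ico 0 (2 * π) → y ∈ Ico 0 (2 * π) → x = y :=
    fun h hx hy ↦ h.eq_of_mem_Ico two_pi_pos (by rwa [zero_add]) (by rwa [zero_add])
  ext r
  simp only [paramSet, mem_ofPred_eq, mem_insert_iff, mem_singleton_iff,
    lissajous_eq_lissajous_iff hcop hsin]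
  constructor
  · rintro ⟨hr, hrt | hrt⟩
    · exact .inl (hIco hrt hr ht)
    · exact .inr (hIco (hrt.modEq hcop hst) hr hs)
  · rintro (rfl | rfl)
    · exact ⟨ht, .inl modEq_rfl⟩
    · exact ⟨hs, .inr hst⟩

theorem exists_mem_crossingIndices (hcop : m1.Coprime m2) (heven : Even m2) (hm2 : m2 ≠ 0)
    {s t : ℝ} (ht : t ∈ Ico 0 (2 * π)) (hsin : sin (m2 * t) ≠ 0)
    (hst : IsCrossingPair m1 m2 s t) : ∃ N ∈ crossingIndices m1 m2, t = gridParam m1 m2 N := by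
  have hm1 := hcop.ne_zero_of_even heven
  obtain ⟨N, hN⟩ := (exists_isCrossingPair_iff hcop heven).1 ⟨s, hst⟩
  obtain ⟨n, hn, rfl⟩ := exists_eq_gridParam (mul_ne_zero hm1 hm2) ht hN
  exact ⟨n, Finset.mem_filter.2 ⟨Finset.mem_range.2 hn,
    mt (sin_mul_gridParam_eq_zero_iff hm1 hm2).2 hsin⟩, rfl⟩

theorem exists_paramSet_lissajous_gridParam_eq_pair (hcop : m1.Coprime m2) (heven : Even m2)
    (hm2 : m2 ≠ 0) {N : ℕ} (hN : N ∈ crossingIndices m1 m2) :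
    ∃ N' ∈ crossingIndices m1 m2, N' ≠ N ∧ paramSet m1 m2 α (lissajous m1 m2 α (gridParam m1 m2 N))
      = {gridParam m1 m2 N, gridParam m1 m2 N'} := by
  have hm1 := hcop.ne_zero_of_even heven
  obtain ⟨hNlt, hNdvd⟩ := Finset.mem_filter.1 hN
  have ht := gridParam_mem_Ico (Finset.mem_range.1 hNlt)
  have hsin : sin (m2 * gridParam m1 m2 N) ≠ 0 := mt (sin_mul_gridParam_eq_zero_iff hm1 hm2).1 hNdvd
  obtain ⟨s, hst⟩ := (exists_isCrossingPair_iff (t := gridParam m1 m2 N) hcop heven).2 ⟨N, by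
    unfold gridParam
    push_cast
    field_simp⟩
  have hs'st : IsCrossingPair m1 m2 (toIcoMod two_pi_pos 0 s) (gridParam m1 m2 N) :=
    hst.of_modEq_left ((toIcoMod_inj two_pi_pos (c := 0)).1 (toIcoMod_toIcoMod _ _ _ _).symm)
  have hs' : toIcoMod two_pi_pos 0 s ∈ Ico 0 (2 * π) := toIcoMod_mem_Ico' two_pi_pos s
  have hsin' : sin (m2 * toIcoMod two_pi_pos 0 s) ≠ 0 := by
    rw [hs'st.sin_eq_neg]
    exact neg_ne_zero.2 hsin
  obtain ⟨N', hN', hN'eq⟩ := exists_mem_crossingIndices hcop heven hm2 hs' hsin' hs'st.symm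
  refine ⟨N', hN', fun h ↦ hs'st.ne (by rw [hN'eq, h]), ?_⟩
  rw [← hN'eq]
  exact paramSet_lissajous_eq_pair hcop hs' ht hsin hs'st

theorem ncard_paramSet_lissajous_gridParam (hcop : m1.Coprime m2) (heven : Even m2)
    (hm2 : m2 ≠ 0) {N : ℕ} (hN : N ∈ crossingIndices m1 m2) :
    (paramSet m1 m2 α (lissajous m1 m2 α (gridParam m1 m2 N))).ncard = 2 := by
  obtain ⟨N', -, hne, hpair⟩ :=
    exists_paramSet_lissajous_gridParam_eq_pair (α := α) hcop heven hm2 hN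
  rw [hpair, ncard_pair ((gridParam_injective (hcop.ne_zero_of_even heven) hm2).ne hne.symm)]

theorem card_fiber_lissajous_gridParam (hcop : m1.Coprime m2) (heven : Even m2) (hm2 : m2 ≠ 0)
    {N : ℕ} (hN : N ∈ crossingIndices m1 m2) :
    ({j ∈ crossingIndices m1 m2 | lissajous m1 m2 α (gridParam m1 m2 j) =
      lissajous m1 m2 α (gridParam m1 m2 N)} : Finset ℕ).card = 2 := by
  have hinj := gridParam_injective (hcop.ne_zero_of_even heven) hm2
  obtain ⟨N', hN', hne, hpair⟩ :=
    exists_paramSet_lissajous_gridParam_eq_pair (α := α) hcop heven hm2 hN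
  have hfiber : ∀ j ∈ crossingIndices m1 m2,
      lissajous m1 m2 α (gridParam m1 m2 j) = lissajous m1 m2 α (gridParam m1 m2 N) ↔
        j = N ∨ j = N' := fun j hj ↦ by
    have hmem : gridParam m1 m2 j ∈ paramSet m1 m2 α (lissajous m1 m2 α (gridParam m1 m2 N)) ↔
        lissajous m1 m2 α (gridParam m1 m2 j) = lissajous m1 m2 α (gridParam m1 m2 N) :=
      and_iff_right (gridParam_mem_Ico (Finset.mem_range.1 (Finset.mem_filter.1 hj).1))
    rw [← hmem, hpair, mem_insert_iff, mem_singleton_iff, hinj.eq_iff, hinj.eq_iff]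
  suffices {j ∈ crossingIndices m1 m2 | lissajous m1 m2 α (gridParam m1 m2 j) =
      lissajous m1 m2 α (gridParam m1 m2 N)} = {N, N'} by rw [this, Finset.card_pair hne.symm]
  ext j
  simp only [Finset.mem_filter, Finset.mem_insert, Finset.mem_singleton]
  refine ⟨fun ⟨hj, h⟩ ↦ (hfiber j hj).1 h, fun h ↦ ?_⟩
  obtain rfl | rfl := h
  exacts [⟨hN, rfl⟩, ⟨hN', (hfiber _ hN').2 (.inr rfl)⟩]

theorem card_image_lissajous_gridParam (hcop : m1.Coprime m2) (heven : Even m2) (hm2 : m2 ≠ 0) :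
    ((crossingIndices m1 m2).image fun N ↦ lissajous m1 m2 α (gridParam m1 m2 N)).card =
      m2 * (m1 - 1) := by
  have h := Finset.card_eq_mul_card_image_of_card_fiber _ _ fun N hN ↦
    card_fiber_lissajous_gridParam (α := α) hcop heven hm2 hN
  rw [card_crossingIndices, mul_assoc] at h
  omega

theorem ncard_paramSet_pole (hm2 : 0 < m2) {a : ℝ} (ha : sin a = 0) (ha' : a ∈ Ico 0 (2 * π)) :
    (paramSet m1 m2 α (0, 0, cos a)).ncard = m2 := by
  have : paramSet m1 m2 α (0, 0, cos a) = {t ∈ Ico 0 (2 * π) | (m2 : ℝ) * t ≡ a [PMOD 2 * π]} := by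
    ext t
    simp only [paramSet, mem_sep_iff, lissajous_eq_pole_iff ha]
  rw [this, ncard_setOf_mem_Ico_natCast_mul_modEq two_pi_pos ha' hm2]

theorem pole_mem_selfIntersections (hm2 : 0 < m2) (heven : Even m2) {a : ℝ} (ha : sin a = 0)
    (ha' : a ∈ Ico 0 (2 * π)) : (0, 0, cos a) ∈ selfIntersections m1 m2 α := by
  have hcard := ncard_paramSet_pole (m1 := m1) (α := α) hm2 ha ha'
  obtain ⟨t, ht⟩ := nonempty_of_ncard_ne_zero (hcard.trans_ne hm2.ne')
  have h2 : 2 ≤ m2 := by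
    obtain ⟨k, rfl⟩ := heven
    omega
  exact ⟨⟨t, ht⟩, by rwa [hcard]⟩

theorem selfIntersections_diff_poles (hcop : m1.Coprime m2) (heven : Even m2) (hm2 : m2 ≠ 0) :
    selfIntersections m1 m2 α \ {(0, 0, 1), (0, 0, -1)} =
      ↑((crossingIndices m1 m2).image fun N ↦ lissajous m1 m2 α (gridParam m1 m2 N)) := by
  ext x
  simp only [selfIntersections, mem_sdiff, mem_ofPred_eq, mem_insert_iff, mem_singleton_iff,
    Finset.coe_image, mem_image, Finset.mem_coe]
  constructor
  · rintro ⟨⟨⟨t, ht, rfl⟩, hcard⟩, hpole⟩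
    have hsin : sin (m2 * t) ≠ 0 := fun h ↦ hpole (lissajous_eq_pole_of_sin_eq_zero h)
    obtain ⟨s, ⟨hs, hst⟩, hne⟩ := exists_ne_of_one_lt_ncard hcard t
    have hcross : IsCrossingPair m1 m2 s t :=
      ((lissajous_eq_lissajous_iff hcop hsin).1 hst).resolve_left fun h ↦
        hne (h.eq_of_mem_Ico two_pi_pos (by rwa [zero_add]) (by rwa [zero_add]))
    obtain ⟨N, hN, rfl⟩ := exists_mem_crossingIndices hcop heven hm2 ht hsin hcross
    exact ⟨N, hN, rfl⟩
  · rintro ⟨N, hN, rfl⟩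
    have hsin : sin (m2 * gridParam m1 m2 N) ≠ 0 :=
      mt (sin_mul_gridParam_eq_zero_iff (hcop.ne_zero_of_even heven) hm2).1
        (Finset.mem_filter.1 hN).2
    refine ⟨⟨⟨_, gridParam_mem_Ico (Finset.mem_range.1 (Finset.mem_filter.1 hN).1), rfl⟩, ?_⟩,
      mt sin_eq_zero_of_lissajous_eq_pole hsin⟩
    rw [ncard_paramSet_lissajous_gridParam hcop heven hm2 hN]

end Lissajous

theorem stmt4_general (m1 m2 : ℕ) (hm2 : 0 < m2)
    (hgcd : Nat.gcd m1 m2 = 1) (heven : Even m2) (α : ℝ) :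
    Set.ncard (selfIntersections m1 m2 α) = m2 * (m1 - 1) + 2 ∧
    ((0:ℝ), (0:ℝ), (1:ℝ)) ∈ selfIntersections m1 m2 α ∧
    ((0:ℝ), (0:ℝ), (-1:ℝ)) ∈ selfIntersections m1 m2 α ∧
    Set.ncard (paramSet m1 m2 α ((0:ℝ), (0:ℝ), (1:ℝ))) = m2 ∧
    Set.ncard (paramSet m1 m2 α ((0:ℝ), (0:ℝ), (-1:ℝ))) = m2 ∧
    Set.ncard (selfIntersections m1 m2 α \
      {((0:ℝ), (0:ℝ), (1:ℝ)), ((0:ℝ), (0:ℝ), (-1:ℝ))}) = m2 * (m1 - 1) ∧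
    (∀ x ∈ selfIntersections m1 m2 α,
      x ≠ ((0:ℝ), (0:ℝ), (1:ℝ)) → x ≠ ((0:ℝ), (0:ℝ), (-1:ℝ)) →
      Set.ncard (paramSet m1 m2 α x) = 2) := by
  have hdiff := selfIntersections_diff_poles (α := α) hgcd heven hm2.ne'
  have h0 : (0 : ℝ) ∈ Ico 0 (2 * π) := ⟨le_rfl, two_pi_pos⟩
  have hπ : π ∈ Ico 0 (2 * π) := ⟨pi_pos.le, by linarith [pi_pos]⟩
  have hnorth := pole_mem_selfIntersections (m1 := m1) (α := α) hm2 heven sin_zero h0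
  have hsouth := pole_mem_selfIntersections (m1 := m1) (α := α) hm2 heven sin_pi hπ
  rw [cos_zero] at hnorth
  rw [cos_pi] at hsouth
  have hcard : (selfIntersections m1 m2 α \ {(0, 0, 1), (0, 0, -1)}).ncard = m2 * (m1 - 1) := by
    rw [hdiff, ncard_coe_finset, card_image_lissajous_gridParam hgcd heven hm2.ne']
  refine ⟨?_, hnorth, hsouth,
    by simpa using ncard_paramSet_pole (m1 := m1) (α := α) hm2 sin_zero h0,
    by simpa using ncard_paramSet_pole (m1 := m1) (α := α) hm2 sin_pi hπ, hcard, ?_⟩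
  · have hfin : (selfIntersections m1 m2 α).Finite :=
      (hdiff ▸ Finset.finite_toSet _ : (selfIntersections m1 m2 α \ _).Finite).of_sdiff (toFinite _)
    rw [← ncard_sdiff_add_ncard_of_subset (pair_subset hnorth hsouth) hfin, hcard,
      ncard_pair (by norm_num)]
  · intro x hx hn hs
    have : x ∈ selfIntersections m1 m2 α \ {(0, 0, 1), (0, 0, -1)} := ⟨hx, by simp [hn, hs]⟩
    rw [hdiff, Finset.coe_image] at this
    obtain ⟨N, hN, rfl⟩ := this
    exact ncard_paramSet_lissajous_gridParam hgcd heven hm2.ne' hN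

theorem stmt4 (m1 m2 : ℕ) (hm1 : 0 < m1) (hm2 : 0 < m2)
    (hgcd : Nat.gcd m1 m2 = 1) (heven : Even m2) (α : ℝ) :
    Set.ncard (selfIntersections m1 m2 α) = m2 * (m1 - 1) + 2 ∧
    ((0:ℝ), (0:ℝ), (1:ℝ)) ∈ selfIntersections m1 m2 α ∧
    ((0:ℝ), (0:ℝ), (-1:ℝ)) ∈ selfIntersections m1 m2 α ∧
    Set.ncard (paramSet m1 m2 α ((0:ℝ), (0:ℝ), (1:ℝ))) = m2 ∧
    Set.ncard (paramSet m1 m2 α ((0:ℝ), (0:ℝ), (-1:ℝ))) = m2 ∧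
    Set.ncard (selfIntersections m1 m2 α \
      {((0:ℝ), (0:ℝ), (1:ℝ)), ((0:ℝ), (0:ℝ), (-1:ℝ))}) = m2 * (m1 - 1) ∧
    (∀ x ∈ selfIntersections m1 m2 α,
      x ≠ ((0:ℝ), (0:ℝ), (1:ℝ)) → x ≠ ((0:ℝ), (0:ℝ), (-1:ℝ)) →
      Set.ncard (paramSet m1 m2 α x) = 2) :=
  stmt4_general m1 m2 hm2 hgcd heven α
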